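/- Let C > 0 and let b : (0, ∞) → ℝ be a function satisfying the functional equation b(s)·b(s+2) = (s+1)² for all s > 0 and the inequality s < b(s) for all s > C. Then for every s > 0, b(s) equals the infinite product (s+1)·∏_{n=1}^∞ ((s+4n−3)(s+4n+1))/((s+4n−1)²), and this value also equals the continued fraction s + K_{n=1}^∞ ((2n−1)²/(2s)), i.e. the limit of the convergents of the generalized continued fraction with integer part s, partial numerators a_n = (2n−1)² and partial denominators b_n = 2s. -/

import Mathlib

open Filter Real

/-- Numerators of the convergents of a generalized continued fraction with
integer part `b₀`, partial numerators `a n` and partial denominators `b n` (for `n ≥ 1`). -/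
noncomputable def cfNum (b₀ : ℝ) (a b : ℕ → ℝ) : ℕ → ℝ
  | 0 => b₀
  | 1 => b 1 * b₀ + a 1
  | n + 2 => b (n + 2) * cfNum b₀ a b (n + 1) + a (n + 2) * cfNum b₀ a b n

/-- Denominators of the convergents of a generalized continued fraction. -/
noncomputable def cfDen (a b : ℕ → ℝ) : ℕ → ℝ
  | 0 => 1
  | 1 => b 1
  | n + 2 => b (n + 2) * cfDen a b (n + 1) + a (n + 2) * cfDen a b n

/-- `IsCFLimit b₀ a b L` means: the convergents of the generalized continued fraction
`b₀ + a 1 / (b 1 + a 2 / (b 2 + ⋯))` tend to `L`. -/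
def IsCFLimit (b₀ : ℝ) (a b : ℕ → ℝ) (L : ℝ) : Prop :=
  Filter.Tendsto (fun n => cfNum b₀ a b n / cfDen a b n) Filter.atTop (nhds L)

/-!
A solution of `f(s) f(s+2) = (s+1)²` telescopes: the `N`-th partial product equals
`f(s) (s+4N+1) / f(s+4N)`, so it tends to `f(s)` as soon as `(t+1) / f(t) → 1`, and this follows
from `t ≤ f(t)` for large `t`, since the equation then also gives `f(t) ≤ t+1`. Hence `b` is the
infinite product, and so is the value `L` of the continued fraction once `L` is known to be another
such solution. The convergents are the partial sums of an alternating series with decreasing terms,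
and the inverse of its `2m`-th term dominates a multiple of the harmonic sum `∑_{j<m} 1/(j+1)`; so
they converge, to `L(s) ≥ s`. Finally the numerators `p_n` and denominators `q_n` satisfy
`p_n(s) p_n(s+2) - (s+1)² q_n(s) q_n(s+2) = (-1)^(n+1) (1·3⋯(2n+1))²`, so
`(s+1)² - (p_n/q_n)(s) (p_n/q_n)(s+2)` alternates in sign, and its limit `(s+1)² - L(s) L(s+2)`
must vanish.
-/

open Finset Topology

section Convergents

variable {b₀ : ℝ} {a b : ℕ → ℝ}

theorem cfNum_add_two (n : ℕ) :
    cfNum b₀ a b (n + 2) = b (n + 2) * cfNum b₀ a b (n + 1) + a (n + 2) * cfNum b₀ a b n :=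
  rfl

theorem cfDen_add_two (n : ℕ) :
    cfDen a b (n + 2) = b (n + 2) * cfDen a b (n + 1) + a (n + 2) * cfDen a b n :=
  rfl

theorem cfNum_succ_mul_cfDen_sub_cfNum_mul_cfDen_succ (n : ℕ) :
    cfNum b₀ a b (n + 1) * cfDen a b n - cfNum b₀ a b n * cfDen a b (n + 1) =
      (-1) ^ n * ∏ k ∈ range (n + 1), a (k + 1) := by
  induction n with
  | zero => simp only [cfNum, cfDen, pow_zero, zero_add, range_one, prod_singleton]; ring
  | succ n ih =>
    rw [cfNum_add_two, cfDen_add_two, prod_range_succ]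
    linear_combination (-a (n + 2)) * ih

/-- The convergents are the partial sums of the alternating series
`b₀ + ∑ (-1) ^ n * cfTerm a b n`. -/
noncomputable def cfTerm (a b : ℕ → ℝ) (n : ℕ) : ℝ :=
  (∏ k ∈ range (n + 1), a (k + 1)) / (cfDen a b n * cfDen a b (n + 1))

variable (ha : ∀ n, 0 < a (n + 1)) (hb : ∀ n, 0 < b (n + 1))
include ha hb

theorem cfDen_pos (n : ℕ) : 0 < cfDen a b n := by
  induction n using Nat.twoStepInduction with
  | zero => exact one_pos
  | one => exact hb 0
  | more n h₀ h₁ => exact add_pos (mul_pos (hb _) h₁) (mul_pos (ha _) h₀)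

theorem cfTerm_pos (n : ℕ) : 0 < cfTerm a b n :=
  div_pos (prod_pos fun k _ => ha k) (mul_pos (cfDen_pos ha hb n) (cfDen_pos ha hb (n + 1)))

theorem cfNum_div_cfDen_succ_sub (n : ℕ) :
    cfNum b₀ a b (n + 1) / cfDen a b (n + 1) - cfNum b₀ a b n / cfDen a b n =
      (-1) ^ n * cfTerm a b n := by
  have h₀ := (cfDen_pos ha hb n).ne'
  have h₁ := (cfDen_pos ha hb (n + 1)).ne'
  rw [cfTerm, mul_div_assoc', ← cfNum_succ_mul_cfDen_sub_cfNum_mul_cfDen_succ]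
  field_simp

theorem cfNum_div_cfDen_eq_add_sum (n : ℕ) :
    cfNum b₀ a b n / cfDen a b n = b₀ + ∑ k ∈ range n, (-1) ^ k * cfTerm a b k := by
  induction n with
  | zero => simp [cfNum, cfDen]
  | succ n ih => rw [sum_range_succ, ← add_assoc, ← ih, ← cfNum_div_cfDen_succ_sub ha hb]; ring

theorem inv_cfTerm_succ (n : ℕ) :
    (cfTerm a b (n + 1))⁻¹ =
      (cfTerm a b n)⁻¹ + b (n + 2) * cfDen a b (n + 1) ^ 2 / ∏ k ∈ range (n + 2), a (k + 1) := by
  have hA := (prod_pos fun k (_ : k ∈ range (n + 1)) => ha k).ne'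
  have h₀ := (cfDen_pos ha hb n).ne'
  have hlast := (ha (n + 1)).ne'
  rw [cfTerm, cfTerm, inv_div, inv_div, cfDen_add_two, prod_range_succ _ (n + 1)]
  field_simp
  ring

theorem cfTerm_antitone : Antitone (cfTerm a b) := by
  refine antitone_nat_of_succ_le fun n => ?_
  rw [← inv_le_inv₀ (cfTerm_pos ha hb n) (cfTerm_pos ha hb (n + 1)), inv_cfTerm_succ ha hb]
  have := cfDen_pos ha hb (n + 1)
  have : 0 < b (n + 2) * cfDen a b (n + 1) ^ 2 / ∏ k ∈ range (n + 2), a (k + 1) :=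
    div_pos (mul_pos (hb _) (by positivity)) (prod_pos fun k _ => ha k)
  linarith

theorem exists_isCFLimit_of_tendsto_cfTerm (h : Tendsto (cfTerm a b) atTop (𝓝 0)) :
    ∃ L, IsCFLimit b₀ a b L ∧ b₀ ≤ L := by
  obtain ⟨l, hl⟩ := (cfTerm_antitone ha hb).tendsto_alternating_series_of_tendsto_zero h
  refine ⟨b₀ + l, ?_, ?_⟩
  · simpa only [IsCFLimit, cfNum_div_cfDen_eq_add_sum ha hb] using hl.const_add b₀
  · simpa using (cfTerm_antitone ha hb).alternating_series_le_tendsto hl 0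

end Convergents

theorem eq_zero_of_tendsto_of_neg_one_pow_mul_nonneg {u : ℕ → ℝ} {ℓ : ℝ}
    (hu : Tendsto u atTop (𝓝 ℓ)) (hsign : ∀ n, 0 ≤ (-1) ^ n * u n) : ℓ = 0 := by
  have heven : Tendsto (fun k => u (2 * k)) atTop (𝓝 ℓ) :=
    hu.comp (tendsto_atTop_mono (fun k => by dsimp; omega) tendsto_id)
  have hodd : Tendsto (fun k => u (2 * k + 1)) atTop (𝓝 ℓ) :=
    hu.comp (tendsto_atTop_mono (fun k => by dsimp; omega) tendsto_id)
  refine le_antisymm (le_of_tendsto' hodd fun k => ?_) (ge_of_tendsto' heven fun k => ?_)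
  · simpa [pow_succ, pow_mul] using hsign (2 * k + 1)
  · simpa [pow_mul] using hsign (2 * k)

noncomputable def brounckerProd (s : ℝ) (N : ℕ) : ℝ :=
  (s + 1) * ∏ n ∈ Finset.range N,
    ((s + 4 * ((n : ℝ) + 1) - 3) * (s + 4 * ((n : ℝ) + 1) + 1)) / (s + 4 * ((n : ℝ) + 1) - 1) ^ 2

section FunctionalEquation

variable {f : ℝ → ℝ} (hf : ∀ s, 0 < s → f s * f (s + 2) = (s + 1) ^ 2)
include hf

theorem ne_zero_of_funEq {t : ℝ} (ht : 0 < t) : f t ≠ 0 :=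
  left_ne_zero_of_mul (by rw [hf t ht]; positivity)

theorem brounckerProd_mul {s : ℝ} (hs : 0 < s) (N : ℕ) :
    brounckerProd s N * f (s + 4 * N) = f s * (s + 4 * N + 1) := by
  induction N with
  | zero => simp [brounckerProd, mul_comm]
  | succ N ih =>
    set t := s + 4 * (N : ℝ)
    have ht : 0 < t := by positivity
    have e₀ := hf t ht
    have e₂ := hf (t + 2) (by linarith)
    have h₂ := ne_zero_of_funEq hf (by linarith : 0 < t + 2)
    have hstep : brounckerProd s (N + 1) =
        brounckerProd s N * ((t + 1) * (t + 5) / (t + 3) ^ 2) := by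
      rw [brounckerProd, brounckerProd, prod_range_succ, mul_assoc]
      congr 2
      ring
    rw [hstep, show s + 4 * ((N + 1 : ℕ) : ℝ) = t + 4 by push_cast; ring]
    rw [show t + 2 + 2 = t + 4 by ring, show t + 2 + 1 = t + 3 by ring] at e₂
    field_simp
    apply mul_left_cancel₀ (mul_ne_zero h₂ (by positivity : t + 1 ≠ 0))
    linear_combination (t + 5) * (t + 3) ^ 2 * (f (t + 2) * ih - brounckerProd s N * e₀)
      + (t + 1) ^ 2 * (t + 5) * brounckerProd s N * e₂

theorem le_add_one_of_funEq {t : ℝ} (ht : 0 < t) (h : t + 2 ≤ f (t + 2)) : f t ≤ t + 1 := by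
  have e := hf t ht
  have hpos : 0 < f t := pos_of_mul_pos_left (by rw [e]; positivity) (by linarith)
  nlinarith

theorem tendsto_add_one_div_of_funEq (hlow : ∀ᶠ t in atTop, t ≤ f t) :
    Tendsto (fun t => (t + 1) / f t) atTop (𝓝 1) := by
  have hlow₂ : ∀ᶠ t in atTop, t + 2 ≤ f (t + 2) :=
    (tendsto_atTop_add_const_right _ 2 tendsto_id).eventually hlow
  have hbounds : ∀ᶠ t in atTop, 1 ≤ (t + 1) / f t ∧ (t + 1) / f t ≤ 1 + t⁻¹ := by
    filter_upwards [eventually_gt_atTop 0, hlow, hlow₂] with t ht h₀ h₂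
    have hup := le_add_one_of_funEq hf ht h₂
    have hft : 0 < f t := by linarith
    refine ⟨by rw [le_div_iff₀ hft]; linarith, ?_⟩
    rw [div_le_iff₀ hft, add_mul, inv_mul_eq_div, ← sub_le_iff_le_add']
    calc t + 1 - 1 * f t ≤ 1 := by linarith
      _ ≤ f t / t := by rw [le_div_iff₀ ht]; linarith
  have hlim : Tendsto (fun t : ℝ => 1 + t⁻¹) atTop (𝓝 1) := by
    simpa using tendsto_inv_atTop_zero.const_add (1 : ℝ)
  exact tendsto_of_tendsto_of_tendsto_of_le_of_le' tendsto_const_nhds hlim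
    (hbounds.mono fun _ h => h.1) (hbounds.mono fun _ h => h.2)

theorem tendsto_brounckerProd (hlow : ∀ᶠ t in atTop, t ≤ f t) {s : ℝ} (hs : 0 < s) :
    Tendsto (brounckerProd s) atTop (𝓝 (f s)) := by
  have hshift : Tendsto (fun N : ℕ => s + 4 * (N : ℝ)) atTop atTop :=
    tendsto_atTop_add_const_left _ s
      (tendsto_natCast_atTop_atTop.const_mul_atTop (by norm_num : (0 : ℝ) < 4))
  have hprod : brounckerProd s = fun N : ℕ => f s * ((s + 4 * N + 1) / f (s + 4 * N)) := by
    funext N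
    have := ne_zero_of_funEq hf (by positivity : 0 < s + 4 * (N : ℝ))
    rw [mul_div_assoc', eq_div_iff this, brounckerProd_mul hf hs]
  rw [hprod]
  simpa using ((tendsto_add_one_div_of_funEq hf hlow).comp hshift).const_mul (f s)

end FunctionalEquation

noncomputable def oddSq (n : ℕ) : ℝ := (2 * (n : ℝ) - 1) ^ 2

theorem oddSq_succ (n : ℕ) : oddSq (n + 1) = (2 * n + 1) ^ 2 := by
  simp only [oddSq]; push_cast; ring

theorem oddSq_succ_pos (n : ℕ) : 0 < oddSq (n + 1) := by
  rw [oddSq_succ]; positivity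

section BrounckerConvergents

variable {s : ℝ} (hs : 0 < s)
include hs

theorem brounckerDen_pos (n : ℕ) : 0 < cfDen oddSq (fun _ => 2 * s) n :=
  cfDen_pos (b := fun _ => 2 * s) oddSq_succ_pos (fun _ => mul_pos two_pos hs) n

theorem prod_oddSq_le_cfDen_sq (m : ℕ) :
    ∏ k ∈ range (2 * m + 1), oddSq (k + 1) ≤
      (4 * m + 1) * cfDen oddSq (fun _ => 2 * s) (2 * m) ^ 2 := by
  induction m with
  | zero => norm_num [oddSq, cfDen]
  | succ m ih =>
    have hq : (4 * m + 3) ^ 2 * cfDen oddSq (fun _ => 2 * s) (2 * m) ≤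
        cfDen oddSq (fun _ => 2 * s) (2 * m + 2) := by
      have := brounckerDen_pos hs (2 * m + 1)
      rw [cfDen_add_two, oddSq]
      push_cast
      nlinarith
    have hq₀ := (brounckerDen_pos hs (2 * m)).le
    rw [show 2 * (m + 1) + 1 = 2 * m + 1 + 1 + 1 by ring, prod_range_succ, prod_range_succ,
      oddSq_succ, oddSq_succ, show 2 * (m + 1) = 2 * m + 2 by ring]
    generalize ∏ k ∈ range (2 * m + 1), oddSq (k + 1) = A at ih ⊢
    generalize cfDen oddSq (fun _ => 2 * s) (2 * m) = Q at ih hq hq₀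
    generalize cfDen oddSq (fun _ => 2 * s) (2 * m + 2) = Q' at hq ⊢
    push_cast
    rw [show (2 * (2 * (m : ℝ) + 1) + 1) = 4 * m + 3 by ring,
      show (2 * (2 * (m : ℝ) + 2) + 1) = 4 * m + 5 by ring]
    calc A * (4 * m + 3) ^ 2 * (4 * m + 5) ^ 2
        ≤ (4 * m + 1) * Q ^ 2 * (4 * m + 3) ^ 2 * (4 * m + 5) ^ 2 := by gcongr
      _ ≤ (4 * m + 5) * ((4 * m + 3) ^ 2 * Q) ^ 2 := by
          have : (4 * (m : ℝ) + 1) * (4 * m + 5) ≤ (4 * m + 3) ^ 2 := by nlinarith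
          nlinarith [sq_nonneg Q, sq_nonneg ((4 * (m : ℝ) + 3) * (4 * m + 5))]
      _ ≤ (4 * (m + 1) + 1) * Q' ^ 2 := by
          rw [show 4 * ((m : ℝ) + 1) + 1 = 4 * m + 5 by ring]
          gcongr

theorem sum_one_div_le_inv_cfTerm_oddSq (m : ℕ) :
    2 * s / 5 * ∑ j ∈ range m, (1 / (j + 1) : ℝ) ≤
      (cfTerm oddSq (fun _ => 2 * s) (2 * m))⁻¹ := by
  have hb : ∀ n : ℕ, 0 < (fun _ : ℕ => 2 * s) (n + 1) := fun _ => mul_pos two_pos hs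
  induction m with
  | zero => simpa using (cfTerm_pos (b := fun _ => 2 * s) oddSq_succ_pos hb 0).le
  | succ m ih =>
    have hodd := inv_cfTerm_succ (b := fun _ => 2 * s) oddSq_succ_pos hb (2 * m)
    have heven := inv_cfTerm_succ (b := fun _ => 2 * s) oddSq_succ_pos hb (2 * m + 1)
    rw [show 2 * m + 1 + 1 = 2 * (m + 1) by ring, show 2 * m + 1 + 2 = 2 * (m + 1) + 1 by ring]
      at heven
    have hA := prod_oddSq_le_cfDen_sq hs (m + 1)
    have hApos : 0 < ∏ k ∈ range (2 * (m + 1) + 1), oddSq (k + 1) :=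
      prod_pos fun k _ => oddSq_succ_pos k
    have hstep : 0 ≤ 2 * s * cfDen oddSq (fun _ => 2 * s) (2 * m + 1) ^ 2 /
        ∏ k ∈ range (2 * m + 2), oddSq (k + 1) :=
      div_nonneg (by positivity) (prod_pos fun k _ => oddSq_succ_pos k).le
    have hnew : 2 * s / 5 * (1 / (m + 1)) ≤
        2 * s * cfDen oddSq (fun _ => 2 * s) (2 * (m + 1)) ^ 2 /
          ∏ k ∈ range (2 * (m + 1) + 1), oddSq (k + 1) := by
      rw [le_div_iff₀ hApos]
      push_cast at hA
      calc 2 * s / 5 * (1 / (m + 1)) * ∏ k ∈ range (2 * (m + 1) + 1), oddSq (k + 1)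
          ≤ 2 * s / 5 * (1 / (m + 1)) *
            ((4 * (m + 1) + 1) * cfDen oddSq (fun _ => 2 * s) (2 * (m + 1)) ^ 2) := by gcongr
        _ ≤ 2 * s * cfDen oddSq (fun _ => 2 * s) (2 * (m + 1)) ^ 2 := by
          rw [← sub_nonneg]
          field_simp
          ring_nf
          positivity
    rw [sum_range_succ, mul_add, heven, hodd]
    linarith

theorem tendsto_cfTerm_oddSq : Tendsto (cfTerm oddSq (fun _ => 2 * s)) atTop (𝓝 0) := by
  have hb : ∀ n : ℕ, 0 < (fun _ : ℕ => 2 * s) (n + 1) := fun _ => mul_pos two_pos hs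
  have hmono : Monotone fun n => (cfTerm oddSq (fun _ => 2 * s) n)⁻¹ := fun m n hmn =>
    inv_anti₀ (cfTerm_pos (b := fun _ => 2 * s) oddSq_succ_pos hb n)
      (cfTerm_antitone (b := fun _ => 2 * s) oddSq_succ_pos hb hmn)
  have hharm : Tendsto (fun m => 2 * s / 5 * ∑ j ∈ range m, (1 / (j + 1) : ℝ)) atTop atTop :=
    tendsto_sum_range_one_div_nat_succ_atTop.const_mul_atTop (by positivity)
  have hinv : Tendsto (fun n => (cfTerm oddSq (fun _ => 2 * s) n)⁻¹) atTop atTop := by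
    refine tendsto_atTop_atTop_of_monotone hmono fun B => ?_
    obtain ⟨m, hm⟩ := (hharm.eventually_ge_atTop B).exists
    exact ⟨2 * m, hm.trans (sum_one_div_le_inv_cfTerm_oddSq hs m)⟩
  exact hinv.inv_tendsto_atTop.congr fun n => inv_inv _

end BrounckerConvergents

noncomputable def brounckerCF (s : ℝ) : ℝ :=
  limUnder atTop fun n => cfNum s oddSq (fun _ => 2 * s) n / cfDen oddSq (fun _ => 2 * s) n

theorem isCFLimit_brounckerCF {s : ℝ} (hs : 0 < s) :
    IsCFLimit s oddSq (fun _ => 2 * s) (brounckerCF s) ∧ s ≤ brounckerCF s := by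
  obtain ⟨L, hL, hsL⟩ := exists_isCFLimit_of_tendsto_cfTerm (b₀ := s) (b := fun _ => 2 * s)
    oddSq_succ_pos (fun _ => mul_pos two_pos hs) (tendsto_cfTerm_oddSq hs)
  rw [brounckerCF, hL.limUnder_eq]
  exact ⟨hL, hsL⟩

section Cross

variable (s : ℝ)

noncomputable def brounckerCross (i j : ℕ) : ℝ :=
  cfNum s oddSq (fun _ => 2 * s) i * cfNum (s + 2) oddSq (fun _ => 2 * (s + 2)) j -
    (s + 1) ^ 2 * (cfDen oddSq (fun _ => 2 * s) i * cfDen oddSq (fun _ => 2 * (s + 2)) j)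

theorem brounckerCross_add_two_left (i j : ℕ) :
    brounckerCross s (i + 2) j =
      2 * s * brounckerCross s (i + 1) j + oddSq (i + 2) * brounckerCross s i j := by
  simp only [brounckerCross, cfNum_add_two, cfDen_add_two]; ring

theorem brounckerCross_add_two_right (i j : ℕ) :
    brounckerCross s i (j + 2) =
      2 * (s + 2) * brounckerCross s i (j + 1) + oddSq (j + 2) * brounckerCross s i j := by
  simp only [brounckerCross, cfNum_add_two, cfDen_add_two]; ring

theorem brounckerCross_eq (n : ℕ) :
    brounckerCross s n n = (-1) ^ (n + 1) * ∏ k ∈ range (n + 1), oddSq (k + 1) ∧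
    brounckerCross s (n + 1) n =
      (-1) ^ (n + 1) * (∏ k ∈ range (n + 1), oddSq (k + 1)) * (s - 2 * n - 2) ∧
    brounckerCross s n (n + 1) =
      (-1) ^ (n + 1) * (∏ k ∈ range (n + 1), oddSq (k + 1)) * (s + 2 * n + 4) := by
  induction n using Nat.twoStepInduction with
  | zero => refine ⟨?_, ?_, ?_⟩ <;> norm_num [brounckerCross, cfNum, cfDen, oddSq] <;> ring
  | one =>
    refine ⟨?_, ?_, ?_⟩ <;> norm_num [brounckerCross, cfNum, cfDen, oddSq, prod_range_succ] <;> ring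
  | more n ih₀ ih₁ =>
    obtain ⟨E₀, -, N₀⟩ := ih₀
    obtain ⟨-, M₁, N₁⟩ := ih₁
    have h₂ : oddSq (n + 2) = (2 * n + 3) ^ 2 := by rw [oddSq_succ]; push_cast; ring
    have h₃ : oddSq (n + 3) = (2 * n + 5) ^ 2 := by rw [oddSq_succ]; push_cast; ring
    set P := ∏ k ∈ range (n + 1), oddSq (k + 1)
    have hP₂ : ∏ k ∈ range (n + 2), oddSq (k + 1) = P * (2 * n + 3) ^ 2 := by
      rw [prod_range_succ, h₂]
    have hP₃ :
        ∏ k ∈ range (n + 2 + 1), oddSq (k + 1) = P * (2 * n + 3) ^ 2 * (2 * n + 5) ^ 2 := by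
      rw [prod_range_succ, hP₂, h₃]
    rw [show n + 1 + 1 = n + 2 from rfl, hP₂] at M₁ N₁
    push_cast at M₁ N₁ ⊢
    have E₂ : brounckerCross s (n + 2) (n + 2) =
        (-1) ^ (n + 3) * (P * (2 * n + 3) ^ 2 * (2 * n + 5) ^ 2) := by
      rw [brounckerCross_add_two_left, brounckerCross_add_two_right s n n, N₁, E₀, N₀, h₂]
      ring
    refine ⟨?_, ?_, ?_⟩
    · rw [hP₃, E₂]
    · rw [show n + 2 + 1 = n + 1 + 2 from rfl, brounckerCross_add_two_left, hP₃, E₂, N₁, h₃]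
      ring
    · rw [show n + 2 + 1 = n + 1 + 2 from rfl, brounckerCross_add_two_right, hP₃, E₂, M₁, h₃]
      ring

end Cross

theorem add_one_sq_sub_cfNum_div_cfDen_mul {s : ℝ} (hs : 0 < s) (n : ℕ) :
    (s + 1) ^ 2 - cfNum s oddSq (fun _ => 2 * s) n / cfDen oddSq (fun _ => 2 * s) n *
        (cfNum (s + 2) oddSq (fun _ => 2 * (s + 2)) n / cfDen oddSq (fun _ => 2 * (s + 2)) n) =
      (-1) ^ n * ((∏ k ∈ range (n + 1), oddSq (k + 1)) /
        (cfDen oddSq (fun _ => 2 * s) n * cfDen oddSq (fun _ => 2 * (s + 2)) n)) := by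
  have h := (brounckerCross_eq s n).1
  have hq := (brounckerDen_pos hs n).ne'
  have hq₂ := (brounckerDen_pos (by linarith : 0 < s + 2) n).ne'
  rw [brounckerCross] at h
  generalize cfNum s oddSq (fun _ => 2 * s) n = p at h ⊢
  generalize cfNum (s + 2) oddSq (fun _ => 2 * (s + 2)) n = p₂ at h ⊢
  generalize cfDen oddSq (fun _ => 2 * s) n = q at h hq ⊢
  generalize cfDen oddSq (fun _ => 2 * (s + 2)) n = q₂ at h hq₂ ⊢
  field_simp
  linear_combination -h

theorem brounckerCF_mul_brounckerCF_add_two {s : ℝ} (hs : 0 < s) :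
    brounckerCF s * brounckerCF (s + 2) = (s + 1) ^ 2 := by
  have hlim := tendsto_const_nhds (x := (s + 1) ^ 2) |>.sub
    ((isCFLimit_brounckerCF hs).1.mul (isCFLimit_brounckerCF (by linarith : 0 < s + 2)).1)
  have := eq_zero_of_tendsto_of_neg_one_pow_mul_nonneg hlim fun n => by
    rw [add_one_sq_sub_cfNum_div_cfDen_mul hs, ← mul_assoc, ← pow_add, ← two_mul, pow_mul]
    have := brounckerDen_pos hs n
    have := brounckerDen_pos (by linarith : 0 < s + 2) n
    have := prod_pos fun k (_ : k ∈ range (n + 1)) => oddSq_succ_pos k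
    norm_num
    positivity
  linarith

theorem brouncker_product_and_cf_general (C : ℝ) (b : ℝ → ℝ)
    (hfun : ∀ s : ℝ, 0 < s → b s * b (s + 2) = (s + 1) ^ 2)
    (hineq : ∀ s : ℝ, C < s → s < b s) :
    ∀ s : ℝ, 0 < s →
      Tendsto (fun N : ℕ => (s + 1) * ∏ n ∈ Finset.range N,
          ((s + 4 * ((n : ℝ) + 1) - 3) * (s + 4 * ((n : ℝ) + 1) + 1)) /
            (s + 4 * ((n : ℝ) + 1) - 1) ^ 2) atTop (nhds (b s)) ∧
      IsCFLimit s (fun n => (2 * (n : ℝ) - 1) ^ 2) (fun _ => 2 * s) (b s) := by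
  intro s hs
  have hb : Tendsto (brounckerProd s) atTop (𝓝 (b s)) :=
    tendsto_brounckerProd hfun ((eventually_gt_atTop C).mono fun t ht => (hineq t ht).le) hs
  have hcf : Tendsto (brounckerProd s) atTop (𝓝 (brounckerCF s)) :=
    tendsto_brounckerProd (fun t ht => brounckerCF_mul_brounckerCF_add_two ht)
      ((eventually_gt_atTop 0).mono fun t ht => (isCFLimit_brounckerCF ht).2) hs
  refine ⟨hb, ?_⟩
  rw [← tendsto_nhds_unique hcf hb]
  exact (isCFLimit_brounckerCF hs).1

theorem brouncker_product_and_cf (C : ℝ) (hC : 0 < C) (b : ℝ → ℝ)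
    (hfun : ∀ s : ℝ, 0 < s → b s * b (s + 2) = (s + 1) ^ 2)
    (hineq : ∀ s : ℝ, C < s → s < b s) :
    ∀ s : ℝ, 0 < s →
      Tendsto (fun N : ℕ => (s + 1) * ∏ n ∈ Finset.range N,
          ((s + 4 * ((n : ℝ) + 1) - 3) * (s + 4 * ((n : ℝ) + 1) + 1)) /
            (s + 4 * ((n : ℝ) + 1) - 1) ^ 2) atTop (nhds (b s)) ∧
      IsCFLimit s (fun n => (2 * (n : ℝ) - 1) ^ 2) (fun _ => 2 * s) (b s) :=
  brouncker_product_and_cf_general C b hfun hineq
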